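/- arXiv:1709.02451 — 2 statements merged into one kernel-verified Lean document; each statement's English description precedes it below -/
import Mathlib

section
/- Assume $x \in X_u$ (so $u(x) = \sum_{n\ge 0}\lambda^{n+1}(x)f(T^nx)$ converges and $\lambda^n(x)\to\infty^{-1}$, i.e. $\lambda^n(x) \to 0$) and let $t > u(x)$ with $\delta := t - u(x) > 0$. Then for all sufficiently large $n$, $\lambda^n(x)^{-1}\delta \le g_x^n(t) \le 2\lambda^n(x)^{-1}\delta$, where $g_x^n(t) = \lambda^n(x)^{-1}(t - S_{n,\lambda}f(x))$ and $S_{n,\lambda}f(x) = \sum_{j=0}^{n-1}\lambda^{j+1}(x)f(T^jx)$. Consequently, if additionally $\frac1n\log\lambda^n(x) \to \int\log\lambda\,d\mu$, then $\frac1n \log g_x^n(t) \to -\int\log\lambda\,d\mu$. -/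
/-! Since `g n t = (λⁿ x)⁻¹ (t - Sₙ)` and the partial sums `Sₙ` increase to `u`, the gap `t - Sₙ`
lies in `[δ, 2δ]` once the tail `u - Sₙ` is below `δ`. A quantity trapped between two positive
constants has vanishing exponential growth rate, so `g n t` grows at the rate of `(λⁿ x)⁻¹`. -/

open Filter Real Finset Topology

lemma eventually_sub_sum_range_le_two_mul {a : ℕ → ℝ} (ha₀ : ∀ n, 0 ≤ a n) (ha : Summable a)
    {t : ℝ} (ht : ∑' n, a n < t) :
    ∀ᶠ n in atTop, t - ∑' k, a k ≤ t - ∑ j ∈ range n, a j ∧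
      t - ∑ j ∈ range n, a j ≤ 2 * (t - ∑' k, a k) := by
  have htail : Tendsto (fun n => ∑' k, a k - ∑ j ∈ range n, a j) atTop (𝓝 0) := by
    simpa using (tendsto_const_nhds (x := ∑' k, a k)).sub ha.hasSum.tendsto_sum_nat
  filter_upwards [htail.eventually_lt_const (sub_pos.2 ht)] with n hn
  have hpartial_le := ha.sum_le_tsum (range n) fun j _ => ha₀ j
  constructor <;> linarith

lemma tendsto_inv_mul_log_zero_of_eventually_bounded {c : ℕ → ℝ} {m M : ℝ} (hm : 0 < m)
    (hc : ∀ᶠ n in atTop, m ≤ c n ∧ c n ≤ M) :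
    Tendsto (fun n : ℕ => (1 / (n : ℝ)) * log (c n)) atTop (𝓝 0) := by
  have hconst : ∀ K : ℝ, Tendsto (fun n : ℕ => (1 / (n : ℝ)) * K) atTop (𝓝 0) := fun K => by
    simpa using tendsto_one_div_atTop_nhds_zero_nat.mul_const K
  refine tendsto_of_tendsto_of_tendsto_of_le_of_le' (hconst (log m)) (hconst (log M)) ?_ ?_
  · filter_upwards [hc] with n ⟨hlo, _⟩
    gcongr
  · filter_upwards [hc] with n ⟨hlo, hhi⟩
    gcongr
    exact hm.trans_le hlo

theorem stmt_14_general {X : Type*} (T : X → X) (lam f : X → ℝ)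
    (hlampos : ∀ x, 0 < lam x) (hfpos : ∀ x, 0 < f x)
    (Lam : ℕ → X → ℝ)
    (hLam : ∀ n x, Lam n x = ∏ j ∈ Finset.range n, lam (T^[j] x))
    (x : X)
    (hsum : Summable (fun n : ℕ => Lam (n + 1) x * f (T^[n] x)))
    (u t δ : ℝ) (hu : u = ∑' n : ℕ, Lam (n + 1) x * f (T^[n] x))
    (ht : u < t) (hδ : δ = t - u)
    (g : ℕ → ℝ → ℝ)
    (hg : ∀ n s, g n s = (Lam n x)⁻¹ *
      (s - ∑ j ∈ Finset.range n, Lam (j + 1) x * f (T^[j] x))) :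
    (∀ᶠ n in atTop, (Lam n x)⁻¹ * δ ≤ g n t ∧ g n t ≤ 2 * (Lam n x)⁻¹ * δ) ∧
    (∀ L : ℝ, Tendsto (fun n : ℕ => (1 / (n:ℝ)) * Real.log (Lam n x)) atTop (nhds L) →
      Tendsto (fun n : ℕ => (1 / (n:ℝ)) * Real.log (g n t)) atTop (nhds (-L))) := by
  have hLam_pos (n : ℕ) : 0 < Lam n x := hLam n x ▸ prod_pos fun j _ => hlampos _
  have hterm_nonneg (n : ℕ) : 0 ≤ Lam (n + 1) x * f (T^[n] x) :=
    (mul_pos (hLam_pos _) (hfpos _)).le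
  subst hu hδ
  have hgap := eventually_sub_sum_range_le_two_mul hterm_nonneg hsum ht
  refine ⟨?_, fun L hL => ?_⟩
  · filter_upwards [hgap] with n ⟨hlo, hhi⟩
    have hinv_nonneg := (inv_pos.2 (hLam_pos n)).le
    rw [hg]
    exact ⟨by gcongr, by rw [mul_assoc, mul_left_comm]; gcongr⟩
  · have hlog (n : ℕ) : (1 / (n : ℝ)) * log (g n t) = -((1 / (n : ℝ)) * log (Lam n x)) +
        (1 / (n : ℝ)) * log (t - ∑ j ∈ range n, Lam (j + 1) x * f (T^[j] x)) := by
      have hpartial_le := hsum.sum_le_tsum (range n) fun j _ => hterm_nonneg j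
      rw [hg, log_mul (inv_pos.2 (hLam_pos n)).ne' (by linarith), log_inv]
      ring
    simpa only [hlog, add_zero] using
      hL.neg.add (tendsto_inv_mul_log_zero_of_eventually_bounded (sub_pos.2 ht) hgap)

theorem stmt_14 {X : Type*} (T : X → X) (lam f : X → ℝ)
    (hlampos : ∀ x, 0 < lam x) (hfpos : ∀ x, 0 < f x)
    (Lam : ℕ → X → ℝ)
    (hLam : ∀ n x, Lam n x = ∏ j ∈ Finset.range n, lam (T^[j] x))
    (x : X)
    (hsum : Summable (fun n : ℕ => Lam (n + 1) x * f (T^[n] x)))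
    (hdecay : Tendsto (fun n => Lam n x) atTop (nhds 0))
    (u t δ : ℝ) (hu : u = ∑' n : ℕ, Lam (n + 1) x * f (T^[n] x))
    (ht : u < t) (hδ : δ = t - u)
    (g : ℕ → ℝ → ℝ)
    (hg : ∀ n s, g n s = (Lam n x)⁻¹ *
      (s - ∑ j ∈ Finset.range n, Lam (j + 1) x * f (T^[j] x))) :
    (∀ᶠ n in atTop, (Lam n x)⁻¹ * δ ≤ g n t ∧ g n t ≤ 2 * (Lam n x)⁻¹ * δ) ∧
    (∀ L : ℝ, Tendsto (fun n : ℕ => (1 / (n:ℝ)) * Real.log (Lam n x)) atTop (nhds L) →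
      Tendsto (fun n : ℕ => (1 / (n:ℝ)) * Real.log (g n t)) atTop (nhds (-L))) :=
  stmt_14_general T lam f hlampos hfpos Lam hLam x hsum u t δ hu ht hδ g hg
end

section
/- Assume $f, \lambda : X \to (0,\infty)$ are continuous on a compact metric space $X$, $T : X \to X$ is continuous, $x \in X_u$ (the series $u(x) = \sum_{n\ge0}\lambda^{n+1}(x)f(T^nx)$ converges), and $t < u(x)$. Then there exists $r_0 > 0$ such that for all $y \in B_{r_0}(x) \cap X_u$ we have $u(y) > t$. -/
open Filter Topology

/- A finite partial sum exceeding `t` at `x` still exceeds `t` near `x` by continuity, and with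
nonnegative terms every partial sum bounds the full series from below. -/

theorem eventually_lt_tsum_of_continuousAt_of_nonneg {X : Type*} [TopologicalSpace X]
    {g : ℕ → X → ℝ} {x : X} (hg : ∀ n, ContinuousAt (g n) x) (hg₀ : ∀ n y, 0 ≤ g n y)
    (hx : Summable fun n => g n x) {t : ℝ} (ht : t < ∑' n, g n x) :
    ∀ᶠ y in 𝓝 x, Summable (fun n => g n y) → t < ∑' n, g n y := by
  obtain ⟨n, hn⟩ := (hx.hasSum.tendsto_sum_nat.eventually (eventually_gt_nhds ht)).exists
  have hpartial : ContinuousAt (fun y => ∑ j ∈ Finset.range n, g j y) x :=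
    tendsto_finsetSum _ fun j _ => hg j
  filter_upwards [hpartial.eventually (eventually_gt_nhds hn)] with y hy hsum
  exact hy.trans_le (hsum.sum_le_tsum _ fun j _ => hg₀ j y)

theorem continuous_prod_range_iterate {X : Type*} [TopologicalSpace X] {T : X → X}
    (hT : Continuous T) {lam : X → ℝ} (hlam : Continuous lam) (n : ℕ) :
    Continuous fun y => ∏ j ∈ Finset.range n, lam (T^[j] y) :=
  continuous_finsetProd _ fun j _ => hlam.comp (hT.iterate j)

theorem stmt_15_general {X : Type*} [MetricSpace X]
    (T : X → X) (hT : Continuous T)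
    (lam f : X → ℝ) (hlam : Continuous lam) (hf : Continuous f)
    (hlampos : ∀ x, 0 < lam x) (hfpos : ∀ x, 0 < f x)
    (Lam : ℕ → X → ℝ)
    (hLam : ∀ n y, Lam n y = ∏ j ∈ Finset.range n, lam (T^[j] y))
    (Xu : Set X)
    (hXu : Xu = {y | Summable (fun n : ℕ => Lam (n + 1) y * f (T^[n] y))})
    (x : X) (hx : x ∈ Xu)
    (t : ℝ) (ht : t < ∑' n : ℕ, Lam (n + 1) x * f (T^[n] x)) :
    ∃ r₀ > (0:ℝ), ∀ y ∈ Metric.ball x r₀ ∩ Xu,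
      t < ∑' n : ℕ, Lam (n + 1) y * f (T^[n] y) := by
  obtain rfl : Lam = fun n y => ∏ j ∈ Finset.range n, lam (T^[j] y) := funext₂ hLam
  subst hXu
  have hcont : ∀ n,
      Continuous fun y => (∏ j ∈ Finset.range (n + 1), lam (T^[j] y)) * f (T^[n] y) :=
    fun n => (continuous_prod_range_iterate hT hlam (n + 1)).mul (hf.comp (hT.iterate n))
  have hnonneg : ∀ n y, 0 ≤ (∏ j ∈ Finset.range (n + 1), lam (T^[j] y)) * f (T^[n] y) :=
    fun n y => (mul_pos (Finset.prod_pos fun j _ => hlampos _) (hfpos _)).le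
  obtain ⟨r₀, hr₀, hball⟩ := Metric.eventually_nhds_iff_ball.mp <|
    eventually_lt_tsum_of_continuousAt_of_nonneg (fun n => (hcont n).continuousAt) hnonneg hx ht
  exact ⟨r₀, hr₀, fun y ⟨hy, hyXu⟩ => hball y hy hyXu⟩

theorem stmt_15 {X : Type*} [MetricSpace X] [CompactSpace X]
    (T : X → X) (hT : Continuous T)
    (lam f : X → ℝ) (hlam : Continuous lam) (hf : Continuous f)
    (hlampos : ∀ x, 0 < lam x) (hfpos : ∀ x, 0 < f x)
    (Lam : ℕ → X → ℝ)
    (hLam : ∀ n y, Lam n y = ∏ j ∈ Finset.range n, lam (T^[j] y))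
    (Xu : Set X)
    (hXu : Xu = {y | Summable (fun n : ℕ => Lam (n + 1) y * f (T^[n] y))})
    (x : X) (hx : x ∈ Xu)
    (t : ℝ) (ht : t < ∑' n : ℕ, Lam (n + 1) x * f (T^[n] x)) :
    ∃ r₀ > (0:ℝ), ∀ y ∈ Metric.ball x r₀ ∩ Xu,
      t < ∑' n : ℕ, Lam (n + 1) y * f (T^[n] y) :=
  stmt_15_general T hT lam f hlam hf hlampos hfpos Lam hLam Xu hXu x hx t ht
end
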